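/- The center of the even part HO_0̄ of the odd Hamiltonian superalgebra is zero: C(HO_0̄) = 0. -/

import Mathlib

open scoped BigOperators Classical

/-! A concrete model of the truncated divided power superalgebra
`O(n,n;t̲)` over a field `F` of characteristic `p > 3`, of the generalized Witt
superalgebra `W(n,n;t̲)` and of the odd Hamiltonian map `T_H`.  A basis element of
`O(n,n;t̲)` is `x^(α) x^u` with `α i ≤ p^(t i) − 1` and `u ⊆ {n+1,…,2n}` (odd
indices are represented by `Fin n`, with `k : Fin n` standing for `x_{n+k}`);
an element of `O(n,n;t̲)` is its family of coefficients. -/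

section OddHam

variable (p n : ℕ) (t : Fin n → ℕ) (F : Type*) [Field F]

/-- Index set for the monomial basis `x^(α) x^u` of `O(n,n;t̲)`. -/
abbrev Idx := ((i : Fin n) → Fin (p ^ t i)) × Finset (Fin n)

/-- The truncated divided power superalgebra `O(n,n;t̲)`, as coefficient families. -/
abbrev O := Idx p n t → F

/-- Multiplication of `O(n,n;t̲)`:  `x^(α) x^(β) = (∏ᵢ C(αᵢ+βᵢ, αᵢ)) x^(α+β)`
(truncated), and the exterior variables anticommute. -/
noncomputable def omul (f g : O p n t F) : O p n t F := fun x =>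
  ∑ y : Idx p n t, ∑ z : Idx p n t,
    if (∀ i, (y.1 i : ℕ) + (z.1 i : ℕ) = (x.1 i : ℕ)) ∧ Disjoint y.2 z.2 ∧ y.2 ∪ z.2 = x.2
    then f y * g z * (∏ i, (((x.1 i : ℕ).choose (y.1 i : ℕ) : ℕ) : F)) *
      (-1 : F) ^ (∑ a ∈ y.2, ((z.2.filter fun b => b < a).card))
    else 0

/-- The even superderivation `∂_i`, `i ∈ Y_0`:  `∂_i (x^(α)) = x^(α − ε_i)`. -/
noncomputable def dEven (i : Fin n) (f : O p n t F) : O p n t F := fun x =>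
  if h : (x.1 i : ℕ) + 1 < p ^ t i
  then f (Function.update x.1 i ⟨(x.1 i : ℕ) + 1, h⟩, x.2)
  else 0

/-- The odd superderivation `∂_{n+k}`, `k ∈ Y_1`. -/
noncomputable def dOdd (k : Fin n) (f : O p n t F) : O p n t F := fun x =>
  if k ∈ x.2 then 0
  else (-1 : F) ^ ((x.2.filter fun b => b < k).card) * f (x.1, insert k x.2)

/-- The generalized Witt superalgebra `W(n,n;t̲)`: an element `Σ_r f_r ∂_r` is
recorded as the family of its coefficients, `Sum.inl i ↦` coefficient of the even
`∂_i` and `Sum.inr k ↦` coefficient of the odd `∂_{n+k}`. -/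
abbrev W := (Fin n ⊕ Fin n) → O p n t F

/-- The superderivation `∂_r` for `r ∈ Y = Y_0 ∪ Y_1`. -/
noncomputable def dd (r : Fin n ⊕ Fin n) : O p n t F → O p n t F :=
  Sum.elim (dEven p n t F) (dOdd p n t F) r

/-- The action of `X = Σ_r X_r ∂_r ∈ W(n,n;t̲)` on `O(n,n;t̲)`. -/
noncomputable def act (X : W p n t F) (b : O p n t F) : O p n t F :=
  ∑ r : Fin n ⊕ Fin n, omul p n t F (X r) (dd p n t F r b)

/-- `a` is `ℤ₂`-homogeneous of parity `pa`. -/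
def Homog (pa : ℕ) (a : O p n t F) : Prop :=
  ∀ x, a x ≠ 0 → x.2.card % 2 = pa % 2

/-- The odd Hamiltonian map `T_H (a) = Σ_{i=1}^{2n} (−1)^{μ(i) p(a)} ∂_i(a) ∂_{i'}`,
for `a` homogeneous of parity `pa`. -/
noncomputable def TH (pa : ℕ) (a : O p n t F) : W p n t F :=
  Sum.elim (fun i => ((-1 : F) ^ pa) • dOdd p n t F i a) (fun k => dEven p n t F k a)

/-- The superbracket of `W(n,n;t̲)` on homogeneous elements `X, Y` of parities
`px, py`:  `[X,Y] = Σ_s (Σ_r X_r ∂_r(Y_s)) ∂_s − (−1)^{px·py} Σ_s (Σ_r Y_r ∂_r(X_s)) ∂_s`. -/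
noncomputable def brkH (px py : ℕ) (X Y : W p n t F) : W p n t F := fun s =>
  act p n t F X (Y s) - ((-1 : F) ^ (px * py)) • act p n t F Y (X s)

/-- The divided power monomial `x^(q ε_i)`. -/
noncomputable def epow (i : Fin n) (q : ℕ) : O p n t F := fun x =>
  if (∀ j, (x.1 j : ℕ) = if j = i then q else 0) ∧ x.2 = ∅ then 1 else 0

/-- The even variable `x_i`, `i ∈ Y_0`. -/
noncomputable def evar (i : Fin n) : O p n t F := epow p n t F i 1

/-- The odd variable `x_{n+k}`, `k ∈ Y_1`. -/
noncomputable def ovar (k : Fin n) : O p n t F := fun x =>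
  if (∀ j, (x.1 j : ℕ) = 0) ∧ x.2 = {k} then 1 else 0

/-- `Δ_i = T_H(x_i x_{i'}) = x_{i'} ∂_{i'} − x_i ∂_i`. -/
noncomputable def Delta (i : Fin n) : W p n t F :=
  TH p n t F 1 (omul p n t F (evar p n t F i) (ovar p n t F i))

end OddHam

section OddHam2

variable (p n : ℕ) (t : Fin n → ℕ) (F : Type*) [Field F]

/-- The bracket of the even part `W(n,n;t̲)_0̄` (both arguments of parity `0̄`). -/
noncomputable def brk0 (X Y : W p n t F) : W p n t F := brkH p n t F 0 0 X Y

/-- The even part `HO(n,n;t̲)_0̄` of the odd Hamiltonian superalgebra: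
the set of elements `T_H(a)` with `a` odd. -/
def HO0 : Set (W p n t F) :=
  {X | ∃ a : O p n t F, Homog p n t F 1 a ∧ X = TH p n t F 1 a}

/-- `ℤ`-degree of the basis monomial `x^(α) x^u`:  `|α| + |u|`. -/
def degI (x : Idx p n t) : ℕ := (∑ i, (x.1 i : ℕ)) + x.2.card

/-- `X ∈ W(n,n;t̲)` is `ℤ`-homogeneous of degree `d` (coefficients of degree `d + 1`). -/
def WHomog (d : ℤ) (X : W p n t F) : Prop :=
  ∀ r x, X r x ≠ 0 → (degI p n t x : ℤ) = d + 1

/-- `Γ = Σ_{i=1}^n x_{i'} ∂_{i'}`. -/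
noncomputable def Gamma : W p n t F := Sum.elim (fun _ => 0) (ovar p n t F)

/-- The constant `1 ∈ O(n,n;t̲)`. -/
noncomputable def oneO : O p n t F := fun x =>
  if (∀ j, (x.1 j : ℕ) = 0) ∧ x.2 = ∅ then 1 else 0

/-- `∂_i ∈ W(n,n;t̲)` for an even index `i ∈ Y_0`. -/
noncomputable def Del (i : Fin n) : W p n t F :=
  Sum.elim (fun j => if j = i then oneO p n t F else 0) (fun _ => 0)

/-- `D` represents a derivation of the Lie algebra `HO(n,n;t̲)_0̄`
(a linear map preserving `HO_0̄` and satisfying the Leibniz rule there). -/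
def IsDerW (D : W p n t F → W p n t F) : Prop :=
  (∀ X Y, D (X + Y) = D X + D Y) ∧
  (∀ (c : F) X, D (c • X) = c • D X) ∧
  (∀ X ∈ HO0 p n t F, D X ∈ HO0 p n t F) ∧
  (∀ X Y, X ∈ HO0 p n t F → Y ∈ HO0 p n t F →
    D (brk0 p n t F X Y) = brk0 p n t F (D X) Y + brk0 p n t F X (D Y))

/-- `D` represents a derivation of `HO(n,n;t̲)_0̄` of `ℤ`-degree `d`. -/
def IsDerDeg (d : ℤ) (D : W p n t F → W p n t F) : Prop :=
  IsDerW p n t F D ∧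
  ∀ (k : ℤ) X, X ∈ HO0 p n t F → WHomog p n t F k X → WHomog p n t F (k + d) (D X)

end OddHam2

/-! Bracketing a central `Z` with `T_H(x_{n+k}) = -∂_k` shows that the coefficients of `Z`
involve only the odd variables. Bracketing with `X = T_H(x_j x_{n+k}) = x_{n+k} ∂_{n+j} - x_j ∂_k`
then gives `x_{n+k} ∂_{n+j} (Z_s) = Z(X_s)` for each coefficient `Z_s`. For `j = k` the
operator `x_{n+j} ∂_{n+j}` is a projection, which kills the `∂_i`-coefficients (as `2 ≠ 0`) and
pins the `∂_{n+m}`-coefficient to a multiple of `x_{n+m}`; for `j ≠ k` the multiples agree, so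
`Z = c Γ`. Finally `[Γ, T_H(x_{n+k} x_{n+l} x_{n+m})] = 2 T_H(x_{n+k} x_{n+l} x_{n+m})`, which
needs three odd variables, forces `c = 0`. -/

open Finset

section Monomials

variable (p n : ℕ) (t : Fin n → ℕ) (F : Type*) [Field F]

/-- The monomial `x^(a) x^u` (zero when some `a i ≥ p ^ t i`). -/
noncomputable def mono (a : Fin n → ℕ) (u : Finset (Fin n)) : O p n t F := fun x =>
  if (∀ i, (x.1 i : ℕ) = a i) ∧ x.2 = u then 1 else 0

noncomputable def mon (j k : Fin n) : O p n t F := mono p n t F (Pi.single j 1) {k}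

end Monomials

section Calculus

variable {p n : ℕ} {t : Fin n → ℕ} {F : Type*} [Field F]

lemma oneO_eq_mono : oneO p n t F = mono p n t F 0 ∅ := rfl

lemma ovar_eq_mono (k : Fin n) : ovar p n t F k = mono p n t F 0 {k} := rfl

lemma evar_eq_mono (j : Fin n) : evar p n t F j = mono p n t F (Pi.single j 1) ∅ := by
  funext x
  simp [evar, epow, mono, Pi.single_apply]

lemma mono_zero_eq_single [NeZero p] (u : Finset (Fin n)) :
    mono p n t F 0 u = Pi.single (0, u) 1 := by
  funext x
  obtain ⟨α, v⟩ := x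
  simp only [mono, Pi.single_apply, Prod.mk.injEq, Pi.zero_apply, funext_iff, Fin.ext_iff,
    Fin.val_zero]

lemma homog_mono {pa : ℕ} (a : Fin n → ℕ) {u : Finset (Fin n)} (hu : #u % 2 = pa % 2) :
    Homog p n t F pa (mono p n t F a u) := by
  intro x hx
  by_cases h : (∀ i, (x.1 i : ℕ) = a i) ∧ x.2 = u
  · rw [h.2, hu]
  · simp [mono, h] at hx

lemma dEven_mono_of_eq_zero {a : Fin n → ℕ} {i : Fin n} (ha : a i = 0) (u : Finset (Fin n)) :
    dEven p n t F i (mono p n t F a u) = 0 := by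
  funext x
  simp only [dEven, mono]
  split_ifs with _ h
  · have := h.1 i
    simp [ha] at this
  all_goals rfl

lemma dEven_mono {a : Fin n → ℕ} {i : Fin n} (ha : a i ≠ 0) (hlt : a i < p ^ t i)
    (u : Finset (Fin n)) :
    dEven p n t F i (mono p n t F a u) = mono p n t F (Function.update a i (a i - 1)) u := by
  funext x
  simp only [dEven, mono]
  by_cases h : (x.1 i : ℕ) + 1 < p ^ t i
  · rw [dif_pos h]
    refine if_congr (and_congr_left' (forall_congr' fun j => ?_)) rfl rfl
    rcases eq_or_ne j i with rfl | hj
    · simp only [Function.update_self]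
      omega
    · simp only [Function.update_of_ne hj]
  · rw [dif_neg h, if_neg]
    rintro ⟨hx, -⟩
    have := hx i
    rw [Function.update_self] at this
    omega

lemma dOdd_mono (k : Fin n) (a : Fin n → ℕ) (u : Finset (Fin n)) :
    dOdd p n t F k (mono p n t F a u) =
      if k ∈ u then (-1 : F) ^ #((u.erase k).filter fun b => b < k) • mono p n t F a (u.erase k)
      else 0 := by
  funext x
  by_cases hk : k ∈ u
  · rw [if_pos hk]
    simp only [dOdd, mono, Pi.smul_apply, smul_eq_mul]
    by_cases hx : k ∈ x.2
    · rw [if_pos hx, if_neg, mul_zero]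
      rintro ⟨-, h⟩
      simp [h] at hx
    · have hins : insert k x.2 = u ↔ x.2 = u.erase k :=
        ⟨fun h => by rw [← h, erase_insert hx], fun h => by rw [h, insert_erase hk]⟩
      simp only [if_neg hx, hins]
      split_ifs with h
      · rw [h.2]
      · simp
  · rw [if_neg hk]
    simp only [dOdd, mono]
    split_ifs with hx h
    · rfl
    · exact absurd (h.2 ▸ mem_insert_self k x.2) hk
    · simp

lemma dEven_ovar (i k : Fin n) : dEven p n t F i (ovar p n t F k) = 0 :=
  dEven_mono_of_eq_zero rfl _

lemma dOdd_ovar (l k : Fin n) :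
    dOdd p n t F l (ovar p n t F k) = if l = k then oneO p n t F else 0 := by
  rw [ovar_eq_mono, dOdd_mono, oneO_eq_mono]
  split_ifs with h₁ h₂ h₂ <;> simp_all

lemma dEven_evar {j : Fin n} (hj : 1 < p ^ t j) (i : Fin n) :
    dEven p n t F i (evar p n t F j) = if i = j then oneO p n t F else 0 := by
  rw [evar_eq_mono]
  split_ifs with hij
  · subst hij
    rw [dEven_mono (by simp) (by simpa using hj), oneO_eq_mono]
    congr
    funext a
    simp [Function.update_apply, Pi.single_apply]
  · exact dEven_mono_of_eq_zero (by simp [hij]) _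

lemma dOdd_evar (l j : Fin n) : dOdd p n t F l (evar p n t F j) = 0 := by
  simp [evar_eq_mono, dOdd_mono]

lemma dEven_mon {j : Fin n} (hj : 1 < p ^ t j) (i k : Fin n) :
    dEven p n t F i (mon p n t F j k) = if i = j then ovar p n t F k else 0 := by
  rw [mon]
  split_ifs with hij
  · subst hij
    rw [dEven_mono (by simp) (by simpa using hj), ovar_eq_mono]
    congr
    funext a
    simp [Function.update_apply, Pi.single_apply]
  · exact dEven_mono_of_eq_zero (by simp [hij]) _

lemma dOdd_mon (i j k : Fin n) :
    dOdd p n t F i (mon p n t F j k) = if i = k then evar p n t F j else 0 := by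
  rw [mon, dOdd_mono, evar_eq_mono]
  split_ifs with h₁ h₂ h₂ <;> simp_all

lemma homog_ovar (k : Fin n) : Homog p n t F 1 (ovar p n t F k) :=
  homog_mono 0 (by simp)

lemma homog_mon (j k : Fin n) : Homog p n t F 1 (mon p n t F j k) :=
  homog_mono _ (by simp)

end Calculus

section Action

variable {p n : ℕ} {t : Fin n → ℕ} {F : Type*} [Field F]

lemma omul_smul_left (c : F) (f g : O p n t F) :
    omul p n t F (c • f) g = c • omul p n t F f g := by
  funext x
  simp only [omul, Pi.smul_apply, smul_eq_mul, mul_sum]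
  refine sum_congr rfl fun y _ => sum_congr rfl fun z _ => ?_
  split <;> ring

lemma omul_smul_right (c : F) (f g : O p n t F) :
    omul p n t F f (c • g) = c • omul p n t F f g := by
  funext x
  simp only [omul, Pi.smul_apply, smul_eq_mul, mul_sum]
  refine sum_congr rfl fun y _ => sum_congr rfl fun z _ => ?_
  split <;> ring

lemma omul_zero_left (g : O p n t F) : omul p n t F 0 g = 0 := by
  simpa using omul_smul_left 0 0 g

lemma omul_zero_right (f : O p n t F) : omul p n t F f 0 = 0 := by
  simpa using omul_smul_right 0 f 0

lemma omul_mono_zero_left [NeZero p] (u : Finset (Fin n)) (g : O p n t F) (x : Idx p n t) :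
    omul p n t F (mono p n t F 0 u) g x =
      if u ⊆ x.2 then (-1 : F) ^ (∑ a ∈ u, #((x.2 \ u).filter fun b => b < a)) * g (x.1, x.2 \ u)
      else 0 := by
  rw [mono_zero_eq_single, omul, Fintype.sum_eq_single (0, u) fun y hy => by
    simp [Pi.single_eq_of_ne hy]]
  simp only [Pi.single_eq_same, one_mul, Pi.zero_apply, Fin.val_zero, zero_add,
    Nat.choose_zero_right, Nat.cast_one, prod_const_one, mul_one]
  split_ifs with hu
  · rw [Fintype.sum_eq_single (x.1, x.2 \ u)]
    · rw [if_pos ⟨fun _ => rfl, disjoint_sdiff, union_sdiff_of_subset hu⟩, mul_comm]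
    · rintro z hz
      rw [if_neg]
      rintro ⟨h₁, h₂, h₃⟩
      refine hz (Prod.ext (funext fun i => Fin.ext (h₁ i)) ?_)
      rw [← h₃, union_sdiff_cancel_left h₂]
  · refine sum_eq_zero fun z _ => if_neg ?_
    rintro ⟨-, -, h₃⟩
    exact hu (h₃ ▸ subset_union_left)

lemma omul_one_left [NeZero p] (g : O p n t F) : omul p n t F (oneO p n t F) g = g := by
  funext x
  simp [oneO_eq_mono, omul_mono_zero_left]

lemma omul_one_right [NeZero p] (f : O p n t F) : omul p n t F f (oneO p n t F) = f := by
  funext x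
  rw [oneO_eq_mono, mono_zero_eq_single, omul, sum_comm, Fintype.sum_eq_single (0, ∅) fun z hz => by
    simp [Pi.single_eq_of_ne hz]]
  simp only [Pi.single_eq_same, mul_one, Pi.zero_apply, Fin.val_zero, add_zero,
    disjoint_empty_right, union_empty, true_and, filter_empty, card_empty, sum_const_zero, pow_zero]
  rw [Fintype.sum_eq_single x]
  · simp
  · rintro y hy
    rw [if_neg]
    rintro ⟨h₁, h₂⟩
    exact hy (Prod.ext (funext fun i => Fin.ext (h₁ i)) h₂)

lemma omul_ovar_dOdd_self_apply [NeZero p] (k : Fin n) (f : O p n t F) (x : Idx p n t) :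
    omul p n t F (ovar p n t F k) (dOdd p n t F k f) x = if k ∈ x.2 then f x else 0 := by
  rw [ovar_eq_mono, omul_mono_zero_left]
  simp only [singleton_subset_iff, sum_singleton, sdiff_singleton_eq_erase]
  split_ifs with hk
  · rw [dOdd, if_neg (notMem_erase k x.2), insert_erase hk, ← mul_assoc, ← pow_add,
      Even.neg_one_pow ⟨_, rfl⟩, one_mul]
  · rfl

lemma dEven_smul (c : F) (i : Fin n) (f : O p n t F) :
    dEven p n t F i (c • f) = c • dEven p n t F i f := by
  funext x
  simp only [dEven, Pi.smul_apply, smul_eq_mul]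
  split <;> simp

lemma dOdd_smul (c : F) (k : Fin n) (f : O p n t F) :
    dOdd p n t F k (c • f) = c • dOdd p n t F k f := by
  funext x
  simp only [dOdd, Pi.smul_apply, smul_eq_mul]
  split <;> ring

lemma dd_smul (c : F) (r : Fin n ⊕ Fin n) (f : O p n t F) :
    dd p n t F r (c • f) = c • dd p n t F r f := by
  cases r <;> simp [dd, dEven_smul, dOdd_smul]

lemma act_smul_left (c : F) (X : W p n t F) (g : O p n t F) :
    act p n t F (c • X) g = c • act p n t F X g := by
  simp only [act, Pi.smul_apply, omul_smul_left, smul_sum]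

lemma act_smul_right (X : W p n t F) (c : F) (g : O p n t F) :
    act p n t F X (c • g) = c • act p n t F X g := by
  simp only [act, dd_smul, omul_smul_right, smul_sum]

lemma act_zero (X : W p n t F) : act p n t F X 0 = 0 := by
  simpa using act_smul_right X 0 0

lemma act_eq_of_dd_eq_ite [NeZero p] (X : W p n t F) {f : O p n t F} (r₀ : Fin n ⊕ Fin n)
    (hf : ∀ r, dd p n t F r f = if r = r₀ then oneO p n t F else 0) :
    act p n t F X f = X r₀ := by
  rw [act, Fintype.sum_eq_single r₀ fun r hr => by rw [hf, if_neg hr, omul_zero_right], hf,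
    if_pos rfl, omul_one_right]

lemma act_evar [NeZero p] (X : W p n t F) {j : Fin n} (hj : 1 < p ^ t j) :
    act p n t F X (evar p n t F j) = X (Sum.inl j) :=
  act_eq_of_dd_eq_ite X _ fun r => by cases r <;> simp [dd, dEven_evar hj, dOdd_evar]

lemma act_ovar [NeZero p] (X : W p n t F) (k : Fin n) :
    act p n t F X (ovar p n t F k) = X (Sum.inr k) :=
  act_eq_of_dd_eq_ite X _ fun r => by cases r <;> simp [dd, dEven_ovar, dOdd_ovar]

lemma act_oneO (X : W p n t F) : act p n t F X (oneO p n t F) = 0 := by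
  refine sum_eq_zero fun r _ => ?_
  cases r <;> simp [dd, oneO_eq_mono, dEven_mono_of_eq_zero, dOdd_mono, omul_zero_right]

lemma act_Del [NeZero p] (k : Fin n) (g : O p n t F) :
    act p n t F (Del p n t F k) g = dEven p n t F k g := by
  rw [act, Fintype.sum_eq_single (Sum.inl k) fun r hr => by
    cases r <;> simp_all [Del, omul_zero_left]]
  simp [Del, dd, omul_one_left]

lemma act_Del_apply (X : W p n t F) (k : Fin n) (s : Fin n ⊕ Fin n) :
    act p n t F X (Del p n t F k s) = 0 := by
  cases s <;> simp [Del, apply_ite, act_oneO, act_zero]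

lemma act_comm_of_brk0_eq_zero {X Y : W p n t F} (h : brk0 p n t F X Y = 0)
    (s : Fin n ⊕ Fin n) : act p n t F Y (X s) = act p n t F X (Y s) := by
  have h₁ := congrFun h s
  simp only [brk0, brkH, Pi.zero_apply, mul_zero, pow_zero, one_smul] at h₁
  exact (sub_eq_zero.mp h₁).symm

end Action

section Centralizer

variable {p n : ℕ} {t : Fin n → ℕ} {F : Type*} [Field F]

lemma TH_mem_HO0 {a : O p n t F} (ha : Homog p n t F 1 a) : TH p n t F 1 a ∈ HO0 p n t F :=
  ⟨a, ha, rfl⟩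

lemma TH_ovar (k : Fin n) : TH p n t F 1 (ovar p n t F k) = -Del p n t F k := by
  funext r
  cases r <;> simp only [TH, Del, dOdd_ovar, dEven_ovar, Pi.neg_apply, Sum.elim_inl,
    Sum.elim_inr]
  · split_ifs <;> simp
  · simp

lemma dEven_eq_zero_of_brk0_TH_ovar [NeZero p] {Z : W p n t F} {k : Fin n}
    (h : brk0 p n t F Z (TH p n t F 1 (ovar p n t F k)) = 0) (s : Fin n ⊕ Fin n) :
    dEven p n t F k (Z s) = 0 := by
  have h₁ := act_comm_of_brk0_eq_zero h s
  rw [TH_ovar, Pi.neg_apply, ← neg_one_smul F, act_smul_left, act_Del,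
    ← neg_one_smul F (Del _ _ _ _ k s), act_smul_right, act_Del_apply] at h₁
  simpa using h₁

lemma apply_eq_zero_of_dEven_eq_zero {f : O p n t F} {i : Fin n} (hf : dEven p n t F i f = 0)
    {x : Idx p n t} (hx : (x.1 i : ℕ) ≠ 0) : f x = 0 := by
  set y : Idx p n t := (Function.update x.1 i ⟨(x.1 i : ℕ) - 1, by omega⟩, x.2)
  have hlt : (y.1 i : ℕ) + 1 < p ^ t i := by simp [y]; omega
  have hy : (Function.update y.1 i ⟨(y.1 i : ℕ) + 1, hlt⟩, y.2) = x := by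
    refine Prod.ext ?_ rfl
    rw [Function.update_idem, Function.update_eq_self_iff, Fin.ext_iff]
    simp [y]
    omega
  have h₁ := congrFun hf y
  rwa [dEven, dif_pos hlt, hy] at h₁

lemma act_TH_mon [NeZero p] {j : Fin n} (hj : 1 < p ^ t j) (k : Fin n) {g : O p n t F}
    (hg : dEven p n t F k g = 0) :
    act p n t F (TH p n t F 1 (mon p n t F j k)) g =
      omul p n t F (ovar p n t F k) (dOdd p n t F j g) := by
  rw [act, Fintype.sum_eq_single (Sum.inr j) fun r hr => ?_]
  · simp [TH, dd, dEven_mon hj]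
  cases r with
  | inl i =>
    simp only [TH, dd, Sum.elim_inl, dOdd_mon]
    split_ifs with hik
    · rw [hik, hg, omul_zero_right]
    · rw [smul_zero, omul_zero_left]
  | inr m =>
    simp_all [TH, dd, dEven_mon hj, omul_zero_left]

end Centralizer

section Center

variable {p n : ℕ} {t : Fin n → ℕ} {F : Type*} [Field F] [NeZero p] {Z : W p n t F}

lemma dEven_center (hZ : ∀ X ∈ HO0 p n t F, brk0 p n t F Z X = 0) (k : Fin n)
    (s : Fin n ⊕ Fin n) : dEven p n t F k (Z s) = 0 :=
  dEven_eq_zero_of_brk0_TH_ovar (hZ _ (TH_mem_HO0 (homog_ovar k))) s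

lemma center_apply_eq_zero (hZ : ∀ X ∈ HO0 p n t F, brk0 p n t F Z X = 0)
    (s : Fin n ⊕ Fin n) {x : Idx p n t} (hx : x.1 ≠ 0) : Z s x = 0 := by
  obtain ⟨i, hi⟩ := Function.ne_iff.mp hx
  exact apply_eq_zero_of_dEven_eq_zero (dEven_center hZ i s) (Fin.val_ne_iff.mpr hi)

lemma omul_ovar_dOdd_center (hZ : ∀ X ∈ HO0 p n t F, brk0 p n t F Z X = 0) {j : Fin n}
    (hj : 1 < p ^ t j) (k : Fin n) (s : Fin n ⊕ Fin n) :
    omul p n t F (ovar p n t F k) (dOdd p n t F j (Z s)) =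
      act p n t F Z (TH p n t F 1 (mon p n t F j k) s) := by
  rw [← act_TH_mon hj k (dEven_center hZ k s)]
  exact act_comm_of_brk0_eq_zero (hZ _ (TH_mem_HO0 (homog_mon j k))) s

lemma center_inl (h2 : (2 : F) ≠ 0) (hZ : ∀ X ∈ HO0 p n t F, brk0 p n t F Z X = 0) {l : Fin n}
    (hl : 1 < p ^ t l) : Z (Sum.inl l) = 0 := by
  funext x
  have h₁ := congrFun (omul_ovar_dOdd_center hZ hl l (Sum.inl l)) x
  rw [omul_ovar_dOdd_self_apply, TH, Sum.elim_inl, act_smul_right, dOdd_mon, if_pos rfl,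
    act_evar Z hl] at h₁
  split_ifs at h₁
  · rw [Pi.smul_apply, smul_eq_mul, pow_one] at h₁
    have : (2 : F) * Z (Sum.inl l) x = 0 := by linear_combination h₁
    simpa [h2] using this
  · simpa using h₁.symm

lemma mem_iff_of_center_inr_apply_ne_zero (hZ : ∀ X ∈ HO0 p n t F, brk0 p n t F Z X = 0)
    {j : Fin n} (hj : 1 < p ^ t j) {m : Fin n} {x : Idx p n t} (hx : Z (Sum.inr m) x ≠ 0) :
    j ∈ x.2 ↔ j = m := by
  have h₁ := congrFun (omul_ovar_dOdd_center hZ hj j (Sum.inr m)) x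
  rw [omul_ovar_dOdd_self_apply, TH, Sum.elim_inr, dEven_mon hj] at h₁
  by_cases hmj : m = j
  · subst hmj
    rw [if_pos rfl, act_ovar] at h₁
    simp only [ite_eq_left_iff] at h₁
    exact ⟨fun _ => rfl, fun _ => by_contra fun h => hx (h₁ h).symm⟩
  · rw [if_neg hmj, act_zero, Pi.zero_apply, ite_eq_right_iff] at h₁
    exact ⟨fun h => absurd (h₁ h) hx, fun h => absurd h.symm hmj⟩

lemma center_inr_eq_smul_ovar (hZ : ∀ X ∈ HO0 p n t F, brk0 p n t F Z X = 0)
    (hpt : ∀ i, 1 < p ^ t i) (m : Fin n) :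
    Z (Sum.inr m) = Z (Sum.inr m) (0, {m}) • ovar p n t F m := by
  funext x
  rw [ovar_eq_mono, mono_zero_eq_single, Pi.smul_apply, smul_eq_mul]
  by_cases hxm : x = (0, {m})
  · simp [hxm]
  · rw [Pi.single_eq_of_ne hxm, mul_zero]
    by_contra hx
    refine hxm (Prod.ext (by_contra fun h => hx (center_apply_eq_zero hZ _ h)) ?_)
    ext j
    rw [mem_singleton]
    exact mem_iff_of_center_inr_apply_ne_zero hZ (hpt j) hx

lemma center_inr_eq (hZ : ∀ X ∈ HO0 p n t F, brk0 p n t F Z X = 0) (hpt : ∀ i, 1 < p ^ t i)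
    (j k : Fin n) : Z (Sum.inr k) = Z (Sum.inr j) (0, {j}) • ovar p n t F k := by
  have h₁ := omul_ovar_dOdd_center hZ (hpt j) k (Sum.inr j)
  rwa [center_inr_eq_smul_ovar hZ hpt j, dOdd_smul, dOdd_ovar, if_pos rfl, omul_smul_right,
    omul_one_right, TH, Sum.elim_inr, dEven_mon (hpt j), if_pos rfl, act_ovar, eq_comm] at h₁

lemma center_eq_smul_Gamma (h2 : (2 : F) ≠ 0) (hZ : ∀ X ∈ HO0 p n t F, brk0 p n t F Z X = 0)
    (hpt : ∀ i, 1 < p ^ t i) (j : Fin n) : Z = Z (Sum.inr j) (0, {j}) • Gamma p n t F := by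
  funext r
  cases r with
  | inl l => simp [center_inl h2 hZ (hpt l), Gamma]
  | inr k => exact center_inr_eq hZ hpt j k

end Center

section Gamma

variable {p n : ℕ} {t : Fin n → ℕ} {F : Type*} [Field F] [NeZero p]

lemma act_Gamma_apply (g : O p n t F) (x : Idx p n t) :
    act p n t F (Gamma p n t F) g x = #x.2 * g x := by
  simp only [act, Fintype.sum_sum_type, Finset.sum_apply, Gamma, Sum.elim_inl, Sum.elim_inr,
    omul_zero_left, dd, omul_ovar_dOdd_self_apply, Pi.zero_apply, sum_const_zero, zero_add]
  rw [sum_ite_mem, univ_inter, sum_const, nsmul_eq_mul]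

lemma eq_zero_of_smul_Gamma_mem_center (h2 : (2 : F) ≠ 0) {k l m : Fin n} (hkl : k ≠ l)
    (hkm : k ≠ m) (hlm : l ≠ m) {c : F}
    (hc : ∀ X ∈ HO0 p n t F, brk0 p n t F (c • Gamma p n t F) X = 0) : c = 0 := by
  have hb : Homog p n t F 1 (mono p n t F 0 {k, l, m}) :=
    homog_mono 0 (by rw [card_insert_of_notMem (by simp [hkl, hkm]), card_pair hlm])
  have h₁ := congrFun (act_comm_of_brk0_eq_zero (hc _ (TH_mem_HO0 hb)) (Sum.inl k)) (0, {l, m})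
  have hΓ : (c • Gamma p n t F) (Sum.inl k) = 0 := by simp [Gamma]
  rw [hΓ, act_zero, act_smul_left, Pi.zero_apply, Pi.smul_apply, act_Gamma_apply, TH,
    Sum.elim_inl, dOdd_mono, if_pos (mem_insert_self _ _), erase_insert (by simp [hkl, hkm])] at h₁
  simpa [mono, card_pair hlm, h2] using h₁

end Gamma

theorem stmt18_general (p n : ℕ) (t : Fin n → ℕ) (F : Type*) [Field F]
    (hp3 : 3 < p) [CharP F p] (hn : 3 ≤ n) (ht : ∀ i, 1 ≤ t i) :
    ∀ Z ∈ HO0 p n t F, (∀ X ∈ HO0 p n t F, brk0 p n t F Z X = 0) → Z = 0 := by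
  intro Z _ hZ
  have : NeZero p := ⟨by omega⟩
  have hpt : ∀ i, 1 < p ^ t i := fun i => Nat.one_lt_pow (by have := ht i; omega) (by omega)
  have h2 : (2 : F) ≠ 0 := by
    have : ¬p ∣ 2 := fun h => by have := Nat.le_of_dvd two_pos h; omega
    exact_mod_cast (CharP.cast_eq_zero_iff F p 2).not.mpr this
  let k : Fin n := ⟨0, by omega⟩
  let l : Fin n := ⟨1, by omega⟩
  let m : Fin n := ⟨2, by omega⟩
  obtain ⟨c, rfl⟩ : ∃ c : F, Z = c • Gamma p n t F := ⟨_, center_eq_smul_Gamma h2 hZ hpt k⟩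
  rw [eq_zero_of_smul_Gamma_mem_center h2 (k := k) (l := l) (m := m) (by simp [k, l, Fin.ext_iff])
    (by simp [k, m, Fin.ext_iff]) (by simp [l, m, Fin.ext_iff]) hZ, zero_smul]

/-- The center of `HO(n,n;t̲)_0̄` is zero. -/
theorem stmt18 (p n : ℕ) (t : Fin n → ℕ) (F : Type*) [Field F]
    (hp : p.Prime) (hp3 : 3 < p) [CharP F p] (hn : 3 ≤ n) (ht : ∀ i, 1 ≤ t i) :
    ∀ Z ∈ HO0 p n t F, (∀ X ∈ HO0 p n t F, brk0 p n t F Z X = 0) → Z = 0 :=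
  stmt18_general p n t F hp3 hn ht
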